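/- Let H be a Hilbert space, U ⊂ ℂ open connected, and A : U → B(H) an analytic family of compact operators. If (Id − A(λ₀))⁻¹ exists for some λ₀ ∈ U, then the set of λ ∈ U for which Id − A(λ) is not invertible is a discrete subset of U. -/

import Mathlib

/-!
Approximate the compact operator `A z₀` within `1` by `F = P ∘ A z₀`, where `P : H → V` is the
orthogonal projection onto a finite-dimensional subspace `V`, and let `ι : V → H` be the inclusion.
Near `z₀`, `1 - (A z - F)` is invertible with analytic inverse `R z`, and
`1 - A z = (1 - (A z - F)) (1 - (R z ι) (P A z₀))`. The second factor is invertible iff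
`1 - (P A z₀) (R z ι)` is, an operator on `V`; so locally the non-invertible points are the zeros
of the analytic function `z ↦ det (1 - (P A z₀) (R z ι))`. Hence each point of `U` has either a
punctured neighbourhood of invertible points or a neighbourhood of non-invertible points. Both
alternatives are open conditions, so by connectedness the first holds everywhere, since it holds
at `λ₀`.
-/

open Filter Topology

namespace ContinuousLinearMap

section OneSubComp

variable {R E F : Type*} [Ring R] [TopologicalSpace E] [AddCommGroup E] [Module R E]
  [IsTopologicalAddGroup E] [TopologicalSpace F] [AddCommGroup F] [Module R F]
  [IsTopologicalAddGroup F]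

theorem isUnit_one_sub_comp_of_isUnit_one_sub_comp (B : E →L[R] F) (C : F →L[R] E)
    (h : IsUnit (1 - B ∘L C)) : IsUnit (1 - C ∘L B) := by
  set S : F →L[R] F := ↑h.unit⁻¹
  have hSl : ∀ y, S y - S (B (C y)) = y := fun y => by
    simpa only [mul_apply_eq_comp, sub_apply, one_apply_eq_self, comp_apply, map_sub]
      using congr($(h.val_inv_mul) y)
  have hSr : ∀ y, S y - B (C (S y)) = y := fun y => by
    simpa only [mul_apply_eq_comp, sub_apply, one_apply_eq_self, comp_apply]
      using congr($(h.mul_val_inv) y)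
  refine ⟨⟨1 - C ∘L B, 1 + C ∘L S ∘L B, ?_, ?_⟩, rfl⟩ <;> ext x <;>
    simp only [mul_apply_eq_comp, sub_apply, add_apply, one_apply_eq_self, comp_apply,
      map_sub, map_add]
  · linear_combination (norm := module) (map_sub C _ _).symm.trans (congrArg C (hSr (B x)))
  · linear_combination (norm := module) (map_sub C _ _).symm.trans (congrArg C (hSl (B x)))

theorem isUnit_one_sub_comp_comm (B : E →L[R] F) (C : F →L[R] E) :
    IsUnit (1 - C ∘L B) ↔ IsUnit (1 - B ∘L C) :=
  ⟨isUnit_one_sub_comp_of_isUnit_one_sub_comp C B, isUnit_one_sub_comp_of_isUnit_one_sub_comp B C⟩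

end OneSubComp

section Det

variable {𝕜 E : Type*} [NontriviallyNormedField 𝕜] [CompleteSpace 𝕜] [NormedAddCommGroup E]
  [NormedSpace 𝕜 E] [FiniteDimensional 𝕜 E]

theorem isUnit_iff_det_ne_zero (f : E →L[𝕜] E) : IsUnit f ↔ f.det ≠ 0 :=
  ⟨fun hf => (LinearMap.isUnit_det _ (hf.map toLinearMapRingHom)).ne_zero,
    fun hf => ⟨(f.toContinuousLinearEquivOfDetNeZero hf).toUnit, rfl⟩⟩

theorem analyticAt_det (f : E →L[𝕜] E) : AnalyticAt 𝕜 (fun g : E →L[𝕜] E => g.det) f := by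
  classical
  let b := Module.finBasis 𝕜 E
  let toMatrix : (E →L[𝕜] E) →L[𝕜] Matrix (Fin _) (Fin _) 𝕜 :=
    ((LinearMap.toMatrix b b).toLinearMap ∘ₗ coeLM 𝕜).toContinuousLinearMap
  have hdet : (fun g : E →L[𝕜] E => g.det) = fun g => (toMatrix g).det :=
    funext fun g => (LinearMap.det_toMatrix b _).symm
  have hentry : ∀ i j, AnalyticAt 𝕜 (fun g => toMatrix g i j) f := fun i j =>
    ((proj j).comp ((proj i).comp toMatrix)).analyticAt f
  simp only [hdet, Matrix.det_apply, Units.smul_def, zsmul_eq_mul]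
  exact Finset.analyticAt_fun_sum _ fun σ _ =>
    analyticAt_const.mul (Finset.analyticAt_fun_prod _ fun i _ => hentry _ _)

end Det

end ContinuousLinearMap

theorem Submodule.norm_sub_starProjection_le {𝕜 E : Type*} [RCLike 𝕜] [NormedAddCommGroup E]
    [InnerProductSpace 𝕜 E] (U : Submodule 𝕜 E) [U.HasOrthogonalProjection] (x : E) {y : E}
    (hy : y ∈ U) : ‖x - U.starProjection x‖ ≤ ‖x - y‖ := by
  rw [starProjection_minimal]
  exact ciInf_le ⟨0, Set.forall_mem_range.2 fun _ => norm_nonneg _⟩ (⟨y, hy⟩ : U)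

namespace IsCompactOperator

variable {𝕜 E : Type*} [RCLike 𝕜] [NormedAddCommGroup E] [InnerProductSpace 𝕜 E]

theorem exists_norm_sub_starProjection_comp_lt {F : Type*} [NormedAddCommGroup F]
    [NormedSpace 𝕜 F] {T : F →L[𝕜] E} (hT : IsCompactOperator T) {ε : ℝ} (hε : 0 < ε) :
    ∃ (V : Submodule 𝕜 E) (_ : FiniteDimensional 𝕜 V), ‖T - V.starProjection ∘L T‖ < ε := by
  obtain ⟨K, hK, hTK⟩ := hT.image_closedBall_subset_compact 1
  obtain ⟨t, -, htf, htK⟩ := hK.finite_cover_balls (half_pos hε)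
  have : FiniteDimensional 𝕜 (Submodule.span 𝕜 t) := FiniteDimensional.span_of_finite 𝕜 htf
  refine ⟨Submodule.span 𝕜 t, this, ?_⟩
  refine lt_of_le_of_lt (ContinuousLinearMap.opNorm_le_of_unit_norm (half_pos hε).le
    fun x hx => ?_) (half_lt_self hε)
  obtain ⟨y, hyt, hy⟩ := Set.mem_iUnion₂.1 (htK (hTK ⟨x, by simp [hx], rfl⟩))
  calc ‖T x - (Submodule.span 𝕜 t).starProjection (T x)‖ ≤ ‖T x - y‖ :=
        Submodule.norm_sub_starProjection_le _ _ (Submodule.subset_span hyt)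
    _ ≤ ε / 2 := (mem_ball_iff_norm.1 hy).le

variable [CompleteSpace E]

open ContinuousLinearMap in
theorem exists_analyticAt_isUnit_one_sub_iff {G : Type*} [NormedAddCommGroup G]
    [NormedSpace 𝕜 G] {A : G → E →L[𝕜] E} {z₀ : G} (hA : AnalyticAt 𝕜 A z₀)
    (hcpt : IsCompactOperator (A z₀)) :
    ∃ d : G → 𝕜, AnalyticAt 𝕜 d z₀ ∧ ∀ᶠ z in 𝓝 z₀, IsUnit (1 - A z) ↔ d z ≠ 0 := by
  obtain ⟨V, _, hV⟩ := hcpt.exists_norm_sub_starProjection_comp_lt one_pos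
  set B : E →L[𝕜] V := V.orthogonalProjectionOnto ∘L A z₀
  set F : E →L[𝕜] E := V.subtypeL ∘L B
  set R : G → E →L[𝕜] E := fun z => Ring.inverse (1 - (A z - F))
  have hunit : ∀ᶠ z in 𝓝 z₀, IsUnit (1 - (A z - F)) :=
    ((((hA.continuousAt.sub continuousAt_const).norm).eventually_lt continuousAt_const) hV).mono
      fun z hz => (Units.oneSub _ hz).isUnit
  have hR : AnalyticAt 𝕜 R z₀ :=
    (analyticOnNhd_inverse _ hunit.self_of_nhds).comp (f := fun z => 1 - (A z - F))
      (analyticAt_const.sub (hA.sub analyticAt_const))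
  let Φ : (E →L[𝕜] E) →L[𝕜] (V →L[𝕜] V) := compL 𝕜 V E V B ∘L (compL 𝕜 V E E).flip V.subtypeL
  refine ⟨fun z => (1 - B ∘L R z ∘L V.subtypeL).det,
    (analyticAt_det _).comp (analyticAt_const.sub ((Φ.analyticAt _).comp hR)), ?_⟩
  filter_upwards [hunit] with z hz
  have hfactor : 1 - A z = (1 - (A z - F)) * (1 - R z * F) := by
    rw [mul_sub, mul_one, ← mul_assoc, Ring.mul_inverse_cancel _ hz, one_mul]
    abel
  rw [hfactor, ← hz.unit_spec, Units.isUnit_units_mul,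
    show R z * F = (R z ∘L V.subtypeL) ∘L B from rfl, isUnit_one_sub_comp_comm,
    isUnit_iff_det_ne_zero]

theorem eventually_nhdsNE_isUnit_one_sub_or_eventually_not_isUnit {A : 𝕜 → E →L[𝕜] E} {z : 𝕜}
    (hA : AnalyticAt 𝕜 A z) (hcpt : IsCompactOperator (A z)) :
    (∀ᶠ w in 𝓝[≠] z, IsUnit (1 - A w)) ∨ ∀ᶠ w in 𝓝 z, ¬ IsUnit (1 - A w) := by
  obtain ⟨d, hd, hiff⟩ := hcpt.exists_analyticAt_isUnit_one_sub_iff hA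
  rcases hd.eventually_eq_zero_or_eventually_ne_zero with hzero | hne
  · exact .inr (by filter_upwards [hzero, hiff] with w h0 h using fun hu => h.1 hu h0)
  · exact .inl (by
      filter_upwards [hne, eventually_nhdsWithin_of_eventually_nhds hiff] with w h0 h
      exact h.2 h0)

end IsCompactOperator

theorem isOpen_setOfPred_eventually_nhdsNE {X : Type*} [TopologicalSpace X] [T1Space X]
    (p : X → Prop) : IsOpen {x | ∀ᶠ y in 𝓝[≠] x, p y} := by
  refine isOpen_iff_mem_nhds.2 fun x hx => ?_
  filter_upwards [eventually_nhdsWithin_iff.1 (eventually_nhdsNE_eventually_nhds_iff.2 hx)]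
    with y hy
  rcases eq_or_ne y x with rfl | hne
  · exact hx
  · exact eventually_nhdsWithin_of_eventually_nhds (hy hne)

theorem IsPreconnected.eventually_nhdsNE_of_dichotomy {X : Type*} [TopologicalSpace X]
    [T1Space X] [∀ x : X, (𝓝[≠] x).NeBot] {U : Set X} (hU : IsPreconnected U) {p : X → Prop}
    (hdich : ∀ x ∈ U, (∀ᶠ y in 𝓝[≠] x, p y) ∨ ∀ᶠ y in 𝓝 x, ¬ p y)
    {x₀ : X} (hx₀ : x₀ ∈ U) (hp : p x₀) : ∀ x ∈ U, ∀ᶠ y in 𝓝[≠] x, p y := by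
  have hdisj : Disjoint {x | ∀ᶠ y in 𝓝[≠] x, p y} {x | ∀ᶠ y in 𝓝 x, ¬ p y} :=
    Set.disjoint_left.2 fun x (hgood : ∀ᶠ y in 𝓝[≠] x, p y) (hbad : ∀ᶠ y in 𝓝 x, ¬ p y) =>
      (hgood.and (eventually_nhdsWithin_of_eventually_nhds hbad)).exists.elim fun _ h => h.2 h.1
  refine hU.subset_left_of_subset_union (isOpen_setOfPred_eventually_nhdsNE p)
    isOpen_setOfPred_eventually_nhds hdisj hdich ⟨x₀, hx₀, ?_⟩
  exact (hdich x₀ hx₀).resolve_right fun hbad => hbad.self_of_nhds hp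

theorem stmt13_general {H : Type*} [NormedAddCommGroup H] [InnerProductSpace ℂ H] [CompleteSpace H]
    (U : Set ℂ) (hUconn : IsConnected U)
    (A : ℂ → H →L[ℂ] H) (hA : AnalyticOnNhd ℂ A U)
    (hcpt : ∀ lam ∈ U, IsCompactOperator (A lam))
    (lam₀ : ℂ) (hlam₀ : lam₀ ∈ U) (hinv : IsUnit (1 - A lam₀)) :
    ∀ z ∈ U, ¬ AccPt z (Filter.principal {lam ∈ U | ¬ IsUnit (1 - A lam)}) := by
  intro z hz hacc
  have hunit : ∀ᶠ w in 𝓝[≠] z, IsUnit (1 - A w) :=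
    hUconn.isPreconnected.eventually_nhdsNE_of_dichotomy
      (fun w hw => (hcpt w hw).eventually_nhdsNE_isUnit_one_sub_or_eventually_not_isUnit (hA w hw))
      hlam₀ hinv z hz
  obtain ⟨w, ⟨-, hnot⟩, hw⟩ := ((accPt_iff_frequently_nhdsNE.1 hacc).and_eventually hunit).exists
  exact hnot hw

/-- The analytic Fredholm theorem: if `A : U → B(H)` is an analytic family of compact
operators on a Hilbert space `H`, `U ⊂ ℂ` open and connected, and `Id - A(λ₀)` is
invertible for some `λ₀ ∈ U`, then the set of `λ ∈ U` at which `Id - A(λ)` fails to be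
invertible is discrete in `U` (no accumulation point in `U`). -/
theorem stmt13 {H : Type*} [NormedAddCommGroup H] [InnerProductSpace ℂ H] [CompleteSpace H]
    (U : Set ℂ) (hU : IsOpen U) (hUconn : IsConnected U)
    (A : ℂ → H →L[ℂ] H) (hA : AnalyticOnNhd ℂ A U)
    (hcpt : ∀ lam ∈ U, IsCompactOperator (A lam))
    (lam₀ : ℂ) (hlam₀ : lam₀ ∈ U) (hinv : IsUnit (1 - A lam₀)) :
    ∀ z ∈ U, ¬ AccPt z (Filter.principal {lam ∈ U | ¬ IsUnit (1 - A lam)}) :=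
  stmt13_general U hUconn A hA hcpt lam₀ hlam₀ hinv
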